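/- Assume K = k_i + k_j = 2 and k_l = 0, and let w = (0, x⁻¹) ∈ V. Then E(w) ∈ B, F(w) ∈ B, w ∉ B, and every z ∈ V with E(z) ∈ B and F(z) ∈ B satisfies z ∈ ℂ·w + B. In other words, the 𝔰-invariant part of H¹(ℂℙ¹, T₂^{ij}) is one-dimensional, spanned by the class of w. -/

import Mathlib

noncomputable section

open LaurentPolynomial

/-- `L = ℂ[x, x⁻¹]`, the Laurent polynomials over `ℂ`. -/
abbrev L : Type := LaurentPolynomial ℂ

/-- The coefficient of `x^n` in a Laurent polynomial. -/
def coeffL (p : L) (n : ℤ) : ℂ := (AddMonoidAlgebra.coeff p : ℤ →₀ ℂ) n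

lemma coeffL_zero (n : ℤ) : coeffL 0 n = 0 := rfl

lemma coeffL_add (a b : L) (n : ℤ) : coeffL (a + b) n = coeffL a n + coeffL b n := by
  unfold coeffL; erw [Finsupp.add_apply]; rfl

lemma coeffL_smul (c : ℂ) (a : L) (n : ℤ) : coeffL (c • a) n = c * coeffL a n := by
  unfold coeffL; erw [Finsupp.smul_apply]; rfl

/-- `L₊`: Laurent polynomials involving only nonnegative powers of `x`. -/
def Lplus : Submodule ℂ L where
  carrier := {p | ∀ n : ℤ, n < 0 → coeffL p n = 0}
  zero_mem' := fun n _ => coeffL_zero n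
  add_mem' := by intro a b ha hb n hn; rw [coeffL_add, ha n hn, hb n hn, add_zero]
  smul_mem' := by intro c p hp n hn; rw [coeffL_smul, hp n hn, mul_zero]

/-- `L₋`: Laurent polynomials involving only nonpositive powers of `x`. -/
def Lminus : Submodule ℂ L where
  carrier := {p | ∀ n : ℤ, 0 < n → coeffL p n = 0}
  zero_mem' := fun n _ => coeffL_zero n
  add_mem' := by intro a b ha hb n hn; rw [coeffL_add, ha n hn, hb n hn, add_zero]
  smul_mem' := by intro c p hp n hn; rw [coeffL_smul, hp n hn, mul_zero]

/-- The derivative `d/dx` on Laurent polynomials. -/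
def D (p : L) : L := Finsupp.sum (AddMonoidAlgebra.coeff p : ℤ →₀ ℂ) fun n a => ((n : ℂ) * a) • T (n - 1)

/-- `V = L × L`, the model of Čech 1-cochains with values in `T₂^{ij}`:
a pair `(a, b)` encodes `a(x)ξᵢξⱼ∂/∂x + b(x)ξᵢξⱼξₗ∂/∂ξₗ` on `U₀ ∩ U₁`. -/
abbrev V : Type := L × L

/-- `B₀ = L₊ × L₊`: cochains holomorphic in `U₀`. -/
def B0 : Submodule ℂ V := Lplus.prod Lplus

/-- `B₁`: cochains holomorphic in `U₁`, i.e. pairs `(a, b)` with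
`x^(K-2)·a ∈ L₋` and `x^K·(b - kl·x⁻¹·a) ∈ L₋`. -/
def B1 (K kl : ℤ) : Submodule ℂ V :=
  Lminus.comap ((LinearMap.mulLeft ℂ (T (K - 2))).comp (LinearMap.fst ℂ L L)) ⊓
  Lminus.comap ((LinearMap.mulLeft ℂ (T K)).comp
    (LinearMap.snd ℂ L L - (kl : ℂ) • (LinearMap.mulLeft ℂ (T (-1))).comp (LinearMap.fst ℂ L L)))

/-- The coboundary subspace `B = B₀ + B₁`. -/
def B (K kl : ℤ) : Submodule ℂ V := B0 ⊔ B1 K kl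

/-- Action of `e = ∂/∂x` on cocycles: `E(a, b) = (a′, b′)`. -/
def Eop : V → V := fun p => (D p.1, D p.2)

/-- Action of `f = ∂/∂y` on cocycles:
`F(a, b) = ((2−K)·x·a − x²·a′, kl·a − K·x·b − x²·b′)`. -/
def Fop (K kl : ℤ) : V → V := fun p =>
  (((2 - K : ℤ) : ℂ) • (T 1 * p.1) - T 2 * D p.1,
   (kl : ℂ) • p.1 - (K : ℂ) • (T 1 * p.2) - T 2 * D p.2)

/-!
With `kl = 0` the coboundary space `B K 0` is a product, and each factor `L₊ + x^(-k)·L₋` consists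
of the Laurent polynomials without monomials in degrees strictly between `-k` and `0`. For `K = 2`
only the `x⁻¹`-coefficient of the second component survives, so `V / B ≅ ℂ` via that coefficient:
it vanishes on `E w = (0, -x⁻²)` and `F w = (0, -1)`, equals `1` on `w`, and `z` is congruent to
its own `x⁻¹`-coefficient times `w`.
-/

lemma coeffL_sub (a b : L) (n : ℤ) : coeffL (a - b) n = coeffL a n - coeffL b n := by
  unfold coeffL; erw [Finsupp.sub_apply]; rfl

lemma coeffL_T (k n : ℤ) : coeffL (T k : L) n = if k = n then 1 else 0 :=
  T_apply n k

lemma coeffL_T_mul (k : ℤ) (p : L) (n : ℤ) : coeffL (T k * p) n = coeffL p (n - k) := by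
  unfold coeffL
  erw [AddMonoidAlgebra.coeff_single_mul_apply p (1 : ℂ) k n, one_mul]
  congr 1; omega

lemma D_T (n : ℤ) : D (T n : L) = (n : ℂ) • T (n - 1) := by
  unfold D
  show Finsupp.sum (Finsupp.single n (1 : ℂ)) _ = _
  rw [Finsupp.sum_single_index (by simp), mul_one]

def nonnegPart (p : L) : L :=
  AddMonoidAlgebra.ofCoeff (Finsupp.filter (fun n : ℤ => 0 ≤ n) (AddMonoidAlgebra.coeff p))

lemma coeffL_nonnegPart (p : L) (n : ℤ) :
    coeffL (nonnegPart p) n = if 0 ≤ n then coeffL p n else 0 := by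
  unfold coeffL nonnegPart
  rw [AddMonoidAlgebra.coeff_ofCoeff, Finsupp.filter_apply]

lemma mem_Lplus_sup_comap_Lminus_iff (k : ℤ) (p : L) :
    p ∈ Lplus ⊔ Lminus.comap (LinearMap.mulLeft ℂ (T k)) ↔
      ∀ n : ℤ, -k < n → n < 0 → coeffL p n = 0 := by
  constructor
  · intro hp n hkn hn
    obtain ⟨q, hq, r, hr, rfl⟩ := Submodule.mem_sup.mp hp
    have hr' := hr (n + k) (by omega)
    rw [LinearMap.mulLeft_apply, coeffL_T_mul, add_sub_cancel_right] at hr'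
    rw [coeffL_add, hq n hn, hr', add_zero]
  · intro h
    refine Submodule.mem_sup.mpr ⟨nonnegPart p, fun n hn => ?_, p - nonnegPart p, fun n hn => ?_,
      add_sub_cancel _ _⟩
    · rw [coeffL_nonnegPart, if_neg (by omega)]
    · rw [LinearMap.mulLeft_apply, coeffL_T_mul, coeffL_sub, coeffL_nonnegPart]
      split_ifs
      · exact sub_self _
      · rw [h (n - k) (by omega) (by omega), sub_zero]

lemma B_zero_eq_prod (K : ℤ) :
    B K 0 = (Lplus ⊔ Lminus.comap (LinearMap.mulLeft ℂ (T (K - 2)))).prod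
      (Lplus ⊔ Lminus.comap (LinearMap.mulLeft ℂ (T K))) := by
  rw [B, B0, B1, Int.cast_zero, zero_smul, sub_zero, Submodule.comap_comp, Submodule.comap_comp,
    ← LinearMap.prod_eq_inf_comap, Submodule.prod_sup_prod]

lemma mem_B_two_zero_iff (v : V) : v ∈ B 2 0 ↔ coeffL v.2 (-1) = 0 := by
  rw [B_zero_eq_prod, Submodule.mem_prod, mem_Lplus_sup_comap_Lminus_iff,
    mem_Lplus_sup_comap_Lminus_iff]
  constructor
  · exact fun h => h.2 (-1) (by norm_num) (by norm_num)
  · refine fun h => ⟨fun n h₁ h₂ => by omega, fun n h₁ h₂ => ?_⟩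
    obtain rfl : n = -1 := by omega
    exact h

theorem stmt_5_general (kl K : ℤ) (hK2 : K = 2) (hkl : kl = 0)
    (w : V) (hw : w = ((0 : L), T (-1))) :
    Eop w ∈ B K kl ∧ Fop K kl w ∈ B K kl ∧ w ∉ B K kl ∧
    ∀ z : V, Eop z ∈ B K kl → Fop K kl z ∈ B K kl →
      ∃ c : ℂ, z - c • w ∈ B K kl := by
  subst hK2 hkl hw
  simp only [mem_B_two_zero_iff, Eop, Fop]
  refine ⟨?_, ?_, ?_, fun z _ _ => ⟨coeffL z.2 (-1), ?_⟩⟩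
  · rw [D_T, coeffL_smul, coeffL_T]
    norm_num
  · rw [D_T, coeffL_sub, coeffL_sub, coeffL_smul, coeffL_smul, coeffL_T_mul, coeffL_T_mul,
      coeffL_smul, coeffL_T, coeffL_T]
    norm_num
  · simp [coeffL_T]
  · simp [coeffL_sub, coeffL_smul, coeffL_T]

/-- If `K = kᵢ + kⱼ = 2` and `kl = 0`, the 𝔰-invariant part of
`H¹(ℂℙ¹, T₂^{ij})` is one-dimensional, spanned by the class of `w = (0, x⁻¹)`. -/
theorem stmt_5 (ki kj kl K : ℤ) (hK : K = ki + kj) (hK2 : K = 2) (hkl : kl = 0)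
    (w : V) (hw : w = ((0 : L), T (-1))) :
    Eop w ∈ B K kl ∧ Fop K kl w ∈ B K kl ∧ w ∉ B K kl ∧
    ∀ z : V, Eop z ∈ B K kl → Fop K kl z ∈ B K kl →
      ∃ c : ℂ, z - c • w ∈ B K kl :=
  stmt_5_general kl K hK2 hkl w hw
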